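/- arXiv:2009.02632 — 2 statements merged into one kernel-verified Lean document; each statement's English description precedes it below -/
import Mathlib

section
/- Let F be a Minkowski norm on ℝⁿ with dual norm F* on (ℝⁿ)*. For every nonzero covector ξ ∈ (ℝⁿ)* there exists a unique nonzero vector y ∈ ℝⁿ such that ξ = g_y(y, ·), where g_y is the fundamental tensor of F at y. In particular the Legendre transform L: y ↦ g_y(y,·) (with L(0)=0) is a bijection from ℝⁿ onto (ℝⁿ)*. -/
open scoped BigOperators

noncomputable section

/-- The fundamental tensor of `F` at `y`:
`g_y(u,v) = (1/2) ∂²/∂s∂t [F²(y + s u + t v)]|_{s=t=0}`. -/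
def fund {n : ℕ} (F : (Fin n → ℝ) → ℝ) (y u v : Fin n → ℝ) : ℝ :=
  (1 / 2) * deriv (fun s : ℝ => deriv (fun t : ℝ => (F (y + s • u + t • v)) ^ 2) 0) 0

/-- `F` is a Minkowski norm on `ℝⁿ`: smooth away from the origin, positive on
nonzero vectors, positively 1-homogeneous, with positive definite fundamental tensor. -/
structure IsMinkowskiNorm {n : ℕ} (F : (Fin n → ℝ) → ℝ) : Prop where
  smooth : ContDiffOn ℝ (⊤ : ℕ∞) F {(0 : Fin n → ℝ)}ᶜ
  nonneg : ∀ y, 0 ≤ F y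
  pos : ∀ y, y ≠ 0 → 0 < F y
  homog : ∀ c : ℝ, 0 < c → ∀ y, F (c • y) = c * F y
  posdef : ∀ y, y ≠ 0 → ∀ v, v ≠ 0 → 0 < fund F y v v

/-- The dual norm `F*(ξ) = sup_{y ≠ 0} ξ(y)/F(y)`, where a covector is
represented by its coordinates and `ξ(y) = ∑ᵢ ξᵢ yᵢ`. -/
def dualNorm {n : ℕ} (F : (Fin n → ℝ) → ℝ) (ξ : Fin n → ℝ) : ℝ :=
  sSup {r : ℝ | ∃ y : Fin n → ℝ, y ≠ 0 ∧ r = (∑ i, ξ i * y i) / F y}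

/-- The Legendre transform of `y ≠ 0`: the covector `ξ = g_y(y, ·)` in coordinates. -/
def legendre {n : ℕ} (F : (Fin n → ℝ) → ℝ) (y : Fin n → ℝ) : Fin n → ℝ :=
  fun i => fund F y y (Pi.single i 1)


/-- The full Legendre transformation `L : ℝⁿ → (ℝⁿ)*`, with `L(0) = 0`. -/
def legendreMap {n : ℕ} (F : (Fin n → ℝ) → ℝ) (y : Fin n → ℝ) : Fin n → ℝ :=
  if y = 0 then 0 else legendre F y

namespace MinkAux

variable {n : ℕ} {F : (Fin n → ℝ) → ℝ}

def phi (F : (Fin n → ℝ) → ℝ) : (Fin n → ℝ) → ℝ := fun z => F z ^ 2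

lemma F_zero (hF : IsMinkowskiNorm F) : F 0 = 0 := by
  have h := hF.homog 2 (by norm_num) 0
  rw [smul_zero] at h; linarith

lemma contDiffAt_phi (hF : IsMinkowskiNorm F) {y : Fin n → ℝ} (hy : y ≠ 0) :
    ContDiffAt ℝ (⊤ : ℕ∞) (phi F) y := by
  have h : ContDiffOn ℝ (⊤ : ℕ∞) (phi F) {(0 : Fin n → ℝ)}ᶜ := hF.smooth.pow 2
  exact h.contDiffAt (isOpen_compl_singleton.mem_nhds hy)

lemma diff_phi (hF : IsMinkowskiNorm F) {y : Fin n → ℝ} (hy : y ≠ 0) :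
    DifferentiableAt ℝ (phi F) y :=
  (contDiffAt_phi hF hy).differentiableAt (by simp)

lemma diff_fderiv_phi (hF : IsMinkowskiNorm F) {y : Fin n → ℝ} (hy : y ≠ 0) :
    DifferentiableAt ℝ (fderiv ℝ (phi F)) y :=
  ((contDiffAt_phi hF hy).fderiv_right (m := 1) (WithTop.coe_le_coe.mpr le_top)).differentiableAt one_ne_zero

lemma hasDerivAt_line (y u : Fin n → ℝ) (t : ℝ) :
    HasDerivAt (fun s : ℝ => y + s • u) u t := by
  simpa using ((hasDerivAt_id t).smul_const u).const_add y

/-- derivative of `s ↦ Dφ(z + s u)[v]` -/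
lemma hasDerivAt_Dphi_line (hF : IsMinkowskiNorm F) {z u : Fin n → ℝ} (v : Fin n → ℝ)
    {t₀ : ℝ} (hz : z + t₀ • u ≠ 0) :
    HasDerivAt (fun s : ℝ => fderiv ℝ (phi F) (z + s • u) v)
      (fderiv ℝ (fderiv ℝ (phi F)) (z + t₀ • u) u v) t₀ := by
  have hd := (diff_fderiv_phi hF hz).hasFDerivAt
  have h1 := ((ContinuousLinearMap.apply ℝ ℝ v).hasFDerivAt.comp (z + t₀ • u) hd)
  have h2 := h1.comp_hasDerivAt t₀ (hasDerivAt_line z u t₀)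
  simpa [Function.comp_def] using h2

lemma fund_eq (hF : IsMinkowskiNorm F) {y : Fin n → ℝ} (hy : y ≠ 0) (u v : Fin n → ℝ) :
    fund F y u v = (1 / 2) * fderiv ℝ (fderiv ℝ (phi F)) y u v := by
  have hop : ∀ᶠ s : ℝ in nhds 0, y + s • u ≠ 0 := by
    have hc : Continuous fun s : ℝ => y + s • u := by fun_prop
    have : {(0 : Fin n → ℝ)}ᶜ ∈ nhds (y + (0 : ℝ) • u) := by
      apply isOpen_compl_singleton.mem_nhds; simpa using hy
    exact hc.continuousAt.preimage_mem_nhds this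
  have hev : (fun s : ℝ => deriv (fun t : ℝ => (F (y + s • u + t • v)) ^ 2) 0)
      =ᶠ[nhds 0] fun s => fderiv ℝ (phi F) (y + s • u) v := by
    filter_upwards [hop] with s hs
    have hd := (diff_phi hF hs).hasFDerivAt
    rw [show y + s • u = y + s • u + (0:ℝ) • v by simp] at hd
    have h2 := hd.comp_hasDerivAt 0 (hasDerivAt_line (y + s • u) v 0)
    rw [show y + s • u + (0:ℝ) • v = y + s • u by simp] at h2
    have h3 : HasDerivAt (fun t : ℝ => (F (y + s • u + t • v)) ^ 2)
        (fderiv ℝ (phi F) (y + s • u) v) 0 := by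
      simpa [Function.comp_def, phi, add_assoc] using h2
    exact h3.deriv
  have h2 : HasDerivAt (fun s : ℝ => fderiv ℝ (phi F) (y + s • u) v)
      (fderiv ℝ (fderiv ℝ (phi F)) y u v) 0 := by
    have := hasDerivAt_Dphi_line hF (z := y) (u := u) v (t₀ := 0) (by simpa using hy)
    simpa using this
  rw [fund, hev.deriv_eq, h2.deriv]


lemma phi_homog (hF : IsMinkowskiNorm F) {c : ℝ} (hc : 0 < c) (y : Fin n → ℝ) :
    phi F (c • y) = c ^ 2 * phi F y := by
  simp only [phi, hF.homog c hc y]; ring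

/-- gradient is positively 1-homogeneous -/
lemma fderiv_phi_homog (hF : IsMinkowskiNorm F) {y : Fin n → ℝ} (hy : y ≠ 0)
    {c : ℝ} (hc : 0 < c) :
    fderiv ℝ (phi F) (c • y) = c • fderiv ℝ (phi F) y := by
  have hcy : c • y ≠ 0 := smul_ne_zero (ne_of_gt hc) hy
  have hsm : HasFDerivAt (fun z : Fin n → ℝ => c • z)
      (c • ContinuousLinearMap.id ℝ (Fin n → ℝ)) y :=
    (ContinuousLinearMap.id ℝ (Fin n → ℝ)).hasFDerivAt.const_smul c
  have h1 : HasFDerivAt (fun z => phi F (c • z))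
      ((fderiv ℝ (phi F) (c • y)).comp (c • ContinuousLinearMap.id ℝ (Fin n → ℝ))) y :=
    ((diff_phi hF hcy).hasFDerivAt).comp y hsm
  have h2 : HasFDerivAt (fun z => phi F (c • z)) ((c ^ 2) • fderiv ℝ (phi F) y) y := by
    have : (fun z : Fin n → ℝ => phi F (c • z)) = fun z => c ^ 2 * phi F z := by
      funext z; exact phi_homog hF hc z
    rw [this]
    simpa [smul_eq_mul, Pi.smul_def] using ((diff_phi hF hy).hasFDerivAt).const_smul (c ^ 2)
  have h3 := h1.unique h2
  ext v
  have := congrArg (fun (L : (Fin n → ℝ) →L[ℝ] ℝ) => L v) h3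
  simp only [ContinuousLinearMap.comp_apply, ContinuousLinearMap.smul_apply,
    ContinuousLinearMap.coe_smul', Pi.smul_apply, ContinuousLinearMap.id_apply,
    smul_eq_mul] at this ⊢
  have hc0 : c ≠ 0 := ne_of_gt hc
  have : c * fderiv ℝ (phi F) (c • y) v = c ^ 2 * fderiv ℝ (phi F) y v := by
    simpa [map_smul, smul_eq_mul] using this
  field_simp at this ⊢
  nlinarith [this]

/-- Euler relation: Dφ(y)[y] = 2 φ(y). -/
lemma euler1 (hF : IsMinkowskiNorm F) {y : Fin n → ℝ} (hy : y ≠ 0) :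
    fderiv ℝ (phi F) y y = 2 * phi F y := by
  have h1 : HasDerivAt (fun c : ℝ => phi F (c • y)) (fderiv ℝ (phi F) y y) 1 := by
    have hd := (diff_phi hF hy).hasFDerivAt
    have hline : HasDerivAt (fun c : ℝ => c • y) y 1 := by
      simpa using (hasDerivAt_id (1:ℝ)).smul_const y
    rw [show y = (1:ℝ) • y by simp] at hd
    simpa [Function.comp_def] using hd.comp_hasDerivAt 1 hline
  have hev : (fun c : ℝ => phi F (c • y)) =ᶠ[nhds 1] fun c => c ^ 2 * phi F y := by
    filter_upwards [eventually_gt_nhds (show (0:ℝ) < 1 by norm_num)] with c hc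
    exact phi_homog hF hc y
  have h2 : HasDerivAt (fun c : ℝ => c ^ 2 * phi F y) (2 * phi F y) 1 := by
    have := ((hasDerivAt_pow 2 (1:ℝ))).mul_const (phi F y)
    simpa using this
  exact h1.unique (h2.congr_of_eventuallyEq hev)

/-- Euler relation for the Hessian: D²φ(y)[y] = Dφ(y). -/
lemma euler2 (hF : IsMinkowskiNorm F) {y : Fin n → ℝ} (hy : y ≠ 0) :
    fderiv ℝ (fderiv ℝ (phi F)) y y = fderiv ℝ (phi F) y := by
  ext v
  have h1 : HasDerivAt (fun c : ℝ => fderiv ℝ (phi F) (c • y) v)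
      (fderiv ℝ (fderiv ℝ (phi F)) y y v) 1 := by
    have := hasDerivAt_Dphi_line hF (z := 0) (u := y) v (t₀ := 1) (by simpa using hy)
    simpa using this
  have hev : (fun c : ℝ => fderiv ℝ (phi F) (c • y) v)
      =ᶠ[nhds 1] fun c => c * fderiv ℝ (phi F) y v := by
    filter_upwards [eventually_gt_nhds (show (0:ℝ) < 1 by norm_num)] with c hc
    rw [fderiv_phi_homog hF hy hc]; simp
  have h2 : HasDerivAt (fun c : ℝ => c * fderiv ℝ (phi F) y v)
      (fderiv ℝ (phi F) y v) 1 := by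
    simpa using (hasDerivAt_id (1:ℝ)).mul_const (fderiv ℝ (phi F) y v)
  exact h1.unique (h2.congr_of_eventuallyEq hev)

lemma fund_yyv (hF : IsMinkowskiNorm F) {y : Fin n → ℝ} (hy : y ≠ 0) (v : Fin n → ℝ) :
    fund F y y v = (1 / 2) * fderiv ℝ (phi F) y v := by
  rw [fund_eq hF hy, euler2 hF hy]

end MinkAux

namespace MinkAux

variable {n : ℕ} {F : (Fin n → ℝ) → ℝ}

lemma legendre_sum (hF : IsMinkowskiNorm F) {y : Fin n → ℝ} (hy : y ≠ 0) (v : Fin n → ℝ) :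
    ∑ i, legendre F y i * v i = (1 / 2) * fderiv ℝ (phi F) y v := by
  have h1 : ∀ i, legendre F y i = (1 / 2) * fderiv ℝ (phi F) y (Pi.single i 1) :=
    fun i => fund_yyv hF hy _
  have h2 : v = ∑ i, v i • (Pi.single i 1 : Fin n → ℝ) := by
    funext j
    simp [Finset.sum_apply, Pi.single_apply, mul_ite, Finset.sum_ite_eq']
  calc ∑ i, legendre F y i * v i
      = ∑ i, (1 / 2) * fderiv ℝ (phi F) y (v i • (Pi.single i 1 : Fin n → ℝ)) := by
        simp only [h1, map_smul, smul_eq_mul]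
        exact Finset.sum_congr rfl fun i _ => by ring
    _ = (1 / 2) * fderiv ℝ (phi F) y v := by
        rw [← Finset.mul_sum, ← map_sum, ← h2]

lemma legendre_self (hF : IsMinkowskiNorm F) {y : Fin n → ℝ} (hy : y ≠ 0) :
    ∑ i, legendre F y i * y i = phi F y := by
  rw [legendre_sum hF hy, euler1 hF hy]; ring

lemma legendre_self_pos (hF : IsMinkowskiNorm F) {y : Fin n → ℝ} (hy : y ≠ 0) :
    0 < ∑ i, legendre F y i * y i := by
  rw [legendre_self hF hy]
  exact pow_pos (hF.pos y hy) 2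

/-- injectivity on nonzero vectors -/
lemma inj_nonzero (hF : IsMinkowskiNorm F) {y₁ y₂ : Fin n → ℝ} (h1 : y₁ ≠ 0) (h2 : y₂ ≠ 0)
    (hl : legendre F y₁ = legendre F y₂) : y₁ = y₂ := by
  by_contra hne
  have hD : fderiv ℝ (phi F) y₁ = fderiv ℝ (phi F) y₂ := by
    ext v
    have e1 := legendre_sum hF h1 v
    have e2 := legendre_sum hF h2 v
    rw [hl] at e1
    rw [e2] at e1
    linarith
  by_cases hseg : ∃ t : ℝ, t ∈ Set.Icc (0:ℝ) 1 ∧ y₁ + t • (y₂ - y₁) = 0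
  · obtain ⟨t, ht, h0⟩ := hseg
    set ℓ := fderiv ℝ (phi F) y₁ with hℓ
    have hy1 : ℓ y₁ = 2 * phi F y₁ := euler1 hF h1
    have hy2 : ℓ y₂ = 2 * phi F y₂ := by rw [hD]; exact euler1 hF h2
    have hp1 : 0 < phi F y₁ := pow_pos (hF.pos _ h1) 2
    have hp2 : 0 < phi F y₂ := pow_pos (hF.pos _ h2) 2
    have h0' : (1 - t) * ℓ y₁ + t * ℓ y₂ = 0 := by
      have : ℓ (y₁ + t • (y₂ - y₁)) = 0 := by rw [h0]; simp
      rw [map_add, map_smul, map_sub] at this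
      simp only [smul_eq_mul] at this
      linarith
    rcases ht with ⟨ht0, ht1⟩
    have hB : t * ℓ y₂ = 0 := by
      have hA : 0 ≤ (1 - t) * ℓ y₁ := mul_nonneg (by linarith) (by linarith)
      have hB' : 0 ≤ t * ℓ y₂ := mul_nonneg ht0 (by linarith)
      linarith
    have ht0' : t = 0 := by
      rcases mul_eq_zero.mp hB with h | h
      · exact h
      · exfalso; linarith
    rw [ht0'] at h0'
    nlinarith
  · push_neg at hseg
    set d := y₂ - y₁ with hd
    have hdne : d ≠ 0 := sub_ne_zero.mpr (Ne.symm hne)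
    have hγ : ∀ t ∈ Set.Icc (0:ℝ) 1, y₁ + t • d ≠ 0 := fun t ht => hseg t ht
    set ψ : ℝ → ℝ := fun t => fderiv ℝ (phi F) (y₁ + t • d) d with hψ
    have hder : ∀ t ∈ Set.Icc (0:ℝ) 1, HasDerivAt ψ
        (fderiv ℝ (fderiv ℝ (phi F)) (y₁ + t • d) d d) t :=
      fun t ht => hasDerivAt_Dphi_line hF d (hγ t ht)
    have hcont : ContinuousOn ψ (Set.Icc 0 1) :=
      fun t ht => ((hder t ht).continuousAt).continuousWithinAt
    have hpos : ∀ t ∈ interior (Set.Icc (0:ℝ) 1), 0 < deriv ψ t := by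
      intro t ht
      rw [interior_Icc] at ht
      have ht' : t ∈ Set.Icc (0:ℝ) 1 := ⟨le_of_lt ht.1, le_of_lt ht.2⟩
      rw [(hder t ht').deriv]
      have := hF.posdef _ (hγ t ht') d hdne
      rw [fund_eq hF (hγ t ht')] at this
      linarith
    have hmono := strictMonoOn_of_deriv_pos (convex_Icc (0:ℝ) 1) hcont hpos
    have := hmono (Set.left_mem_Icc.mpr zero_le_one) (Set.right_mem_Icc.mpr zero_le_one)
      zero_lt_one
    have e0 : ψ 0 = fderiv ℝ (phi F) y₁ d := by simp [hψ]
    have e1 : ψ 1 = fderiv ℝ (phi F) y₂ d := by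
      have hyd : y₁ + (1:ℝ) • d = y₂ := by rw [one_smul, hd]; abel
      simp only [hψ, hyd]
    rw [e0, e1, hD] at this
    exact lt_irrefl _ this

end MinkAux

namespace MinkAux

variable {n : ℕ} {F : (Fin n → ℝ) → ℝ}

set_option maxHeartbeats 1000000 in
lemma exists_legendre (hF : IsMinkowskiNorm F) {ξ : Fin n → ℝ} (hξ : ξ ≠ 0) :
    ∃ y : Fin n → ℝ, y ≠ 0 ∧ legendre F y = ξ := by
  classical
  obtain ⟨i, hi⟩ := Function.ne_iff.mp hξ
  simp only [Pi.zero_apply] at hi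
  have hnt : Nontrivial (Fin n → ℝ) :=
    ⟨0, 1, fun h => by simpa using congrFun h i⟩
  -- the unit sphere
  set S := Metric.sphere (0 : Fin n → ℝ) 1 with hS
  have hSne : S.Nonempty := NormedSpace.sphere_nonempty.mpr zero_le_one
  have hScpt : IsCompact S := isCompact_sphere 0 1
  have hSsub : S ⊆ {(0 : Fin n → ℝ)}ᶜ := by
    intro u hu h0
    rw [Set.mem_singleton_iff.mp h0] at hu
    simp [hS] at hu
  have hFcontS : ContinuousOn F S := (hF.smooth.continuousOn).mono hSsub
  obtain ⟨uC, _, hmax⟩ := hScpt.exists_isMaxOn hSne hFcontS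
  obtain ⟨um, humS, hmin⟩ := hScpt.exists_isMinOn hSne hFcontS
  set C := F uC with hC
  set m := F um with hm
  have hum0 : um ≠ 0 := hSsub humS ∘ Set.mem_singleton_iff.mpr ∘ id
  have hm0 : 0 < m := hF.pos um (fun h => hSsub humS (by simp [h]))
  -- bounds
  have hub : ∀ y : Fin n → ℝ, F y ≤ C * ‖y‖ := by
    intro y
    rcases eq_or_ne y 0 with rfl | hy
    · simp [F_zero hF]
    · have hny : 0 < ‖y‖ := norm_pos_iff.mpr hy
      set u := ‖y‖⁻¹ • y with hu
      have huS : u ∈ S := by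
        simp [hS, hu, norm_smul, abs_of_pos (inv_pos.mpr hny), inv_mul_cancel₀ hny.ne']
      have : F y = ‖y‖ * F u := by
        rw [hu, ← hF.homog ‖y‖ hny, smul_smul, mul_inv_cancel₀ hny.ne', one_smul]
      rw [this, mul_comm C ‖y‖]
      exact mul_le_mul_of_nonneg_left (hmax huS) hny.le
  have hlb : ∀ y : Fin n → ℝ, m * ‖y‖ ≤ F y := by
    intro y
    rcases eq_or_ne y 0 with rfl | hy
    · simp [F_zero hF]
    · have hny : 0 < ‖y‖ := norm_pos_iff.mpr hy
      set u := ‖y‖⁻¹ • y with hu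
      have huS : u ∈ S := by
        simp [hS, hu, norm_smul, abs_of_pos (inv_pos.mpr hny), inv_mul_cancel₀ hny.ne']
      have : F y = ‖y‖ * F u := by
        rw [hu, ← hF.homog ‖y‖ hny, smul_smul, mul_inv_cancel₀ hny.ne', one_smul]
      rw [this, mul_comm m ‖y‖]
      exact mul_le_mul_of_nonneg_left (hmin huS) hny.le
  -- continuity of F everywhere
  have hFcont : Continuous F := by
    rw [continuous_iff_continuousAt]
    intro x
    rcases eq_or_ne x 0 with rfl | hx
    · have h0 : Filter.Tendsto F (nhds 0) (nhds 0) := by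
        apply squeeze_zero hF.nonneg hub
        have : Filter.Tendsto (fun y : Fin n → ℝ => C * ‖y‖) (nhds 0) (nhds (C * ‖(0 : Fin n → ℝ)‖)) :=
          (continuous_const.mul continuous_norm : Continuous fun y : Fin n → ℝ => C * ‖y‖).tendsto 0
        simpa using this
      simpa [ContinuousAt, F_zero hF] using h0
    · exact (hF.smooth.continuousOn).continuousAt (isOpen_compl_singleton.mem_nhds hx)
  have hφcont : Continuous (phi F) := hFcont.pow 2
  -- the covector as a continuous linear map
  set Lξ : (Fin n → ℝ) →L[ℝ] ℝ := ∑ j, ξ j • ContinuousLinearMap.proj j with hLξdef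
  have hLξ : ∀ y, Lξ y = ∑ j, ξ j * y j := by
    intro y
    simp [hLξdef, ContinuousLinearMap.sum_apply, ContinuousLinearMap.proj_apply]
  -- the functional to minimize
  set f : (Fin n → ℝ) → ℝ := fun y => (1 / 2) * phi F y - Lξ y with hfdef
  have hfcont : Continuous f := ((continuous_const.mul hφcont).sub Lξ.continuous)
  have hf0 : f 0 = 0 := by simp [hfdef, phi, F_zero hF]
  set B : ℝ := ∑ j, |ξ j| with hB
  have hBnn : 0 ≤ B := Finset.sum_nonneg fun j _ => abs_nonneg _
  have hLb : ∀ y, Lξ y ≤ B * ‖y‖ := by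
    intro y
    rw [hLξ]
    calc ∑ j, ξ j * y j ≤ ∑ j, |ξ j * y j| :=
          Finset.sum_le_sum fun j _ => le_abs_self _
      _ ≤ ∑ j, |ξ j| * ‖y‖ := by
          apply Finset.sum_le_sum
          intro j _
          rw [abs_mul]
          exact mul_le_mul_of_nonneg_left (by simpa using norm_le_pi_norm y j) (abs_nonneg _)
      _ = B * ‖y‖ := by rw [hB, Finset.sum_mul]
  have hflb : ∀ y : Fin n → ℝ, (1 / 2) * (m * ‖y‖) ^ 2 - B * ‖y‖ ≤ f y := by
    intro y
    have h1 : (m * ‖y‖) ^ 2 ≤ phi F y := by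
      have := hlb y
      have hnn : 0 ≤ m * ‖y‖ := mul_nonneg hm0.le (norm_nonneg y)
      calc (m * ‖y‖) ^ 2 ≤ (F y) ^ 2 := pow_le_pow_left₀ hnn this 2
        _ = phi F y := rfl
    have h2 := hLb y
    simp only [hfdef]
    linarith
  set R : ℝ := (2 * B + 2) / m ^ 2 with hR
  have hRpos : 0 < R := by positivity
  have hout : ∀ y : Fin n → ℝ, R ≤ ‖y‖ → 0 < f y := by
    intro y hy
    have h1 : B + 1 ≤ (1 / 2) * m ^ 2 * ‖y‖ := by
      have : (1 / 2) * m ^ 2 * R = B + 1 := by rw [hR, mul_div_assoc', div_eq_iff (pow_pos hm0 2).ne']; ring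
      nlinarith [mul_le_mul_of_nonneg_left hy (by positivity : (0:ℝ) ≤ (1/2) * m ^ 2)]
    have h2 := hflb y
    have h3 : 0 < ‖y‖ := lt_of_lt_of_le hRpos hy
    have h4 : 0 < (1 / 2) * (m * ‖y‖) ^ 2 - B * ‖y‖ := by
      nlinarith [mul_le_mul_of_nonneg_right h1 h3.le]
    exact lt_of_lt_of_le h4 (hflb y)
  -- minimize over closed ball
  obtain ⟨y₀, hy₀ball, hy₀min⟩ :=
    (isCompact_closedBall (0 : Fin n → ℝ) R).exists_isMinOn
      ⟨0, Metric.mem_closedBall_self hRpos.le⟩ hfcont.continuousOn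
  have hglob : ∀ y, f y₀ ≤ f y := by
    intro y
    by_cases hy : ‖y‖ ≤ R
    · exact hy₀min (by simpa [Metric.mem_closedBall, dist_eq_norm] using hy)
    · have h1 : 0 < f y := hout y (le_of_lt (not_le.mp hy))
      have h2 : f y₀ ≤ f 0 := hy₀min (Metric.mem_closedBall_self hRpos.le)
      rw [hf0] at h2
      linarith
  -- f attains a negative value
  set S' : ℝ := ∑ j, ξ j ^ 2 with hS'
  have hS'pos : 0 < S' := by
    rw [hS']
    apply Finset.sum_pos' (fun j _ => sq_nonneg _)
    exact ⟨i, Finset.mem_univ i, by positivity⟩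
  have hφξ : 0 < phi F ξ := pow_pos (hF.pos ξ hξ) 2
  set ε : ℝ := S' / (phi F ξ + S') with hε
  have hεpos : 0 < ε := by positivity
  have hneg : f (ε • ξ) < 0 := by
    have e1 : phi F (ε • ξ) = ε ^ 2 * phi F ξ := phi_homog hF hεpos ξ
    have e2 : Lξ (ε • ξ) = ε * S' := by
      rw [map_smul, smul_eq_mul, hLξ]
      congr 1
      rw [hS']
      exact Finset.sum_congr rfl fun j _ => by ring
    have hεφ : ε * phi F ξ ≤ S' := by
      rw [hε, div_mul_eq_mul_div, div_le_iff₀ (by positivity)]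
      nlinarith
    simp only [hfdef, e1, e2]
    nlinarith
  have hy₀neg : f y₀ < 0 := lt_of_le_of_lt (hglob (ε • ξ)) hneg
  have hy₀ne : y₀ ≠ 0 := fun h => by rw [h, hf0] at hy₀neg; exact lt_irrefl _ hy₀neg
  -- first-order condition
  have hloc : IsLocalMin f y₀ := Filter.Eventually.of_forall hglob
  have hder : HasFDerivAt f ((1 / 2 : ℝ) • fderiv ℝ (phi F) y₀ - Lξ) y₀ := by
    have h1 : HasFDerivAt (fun y => (1 / 2) * phi F y)
        ((1 / 2 : ℝ) • fderiv ℝ (phi F) y₀) y₀ := by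
      simpa [smul_eq_mul, Pi.smul_def] using (diff_phi hF hy₀ne).hasFDerivAt.const_smul (1 / 2 : ℝ)
    exact h1.sub Lξ.hasFDerivAt
  have hzero : (1 / 2 : ℝ) • fderiv ℝ (phi F) y₀ - Lξ = 0 := by
    rw [← hder.fderiv]
    exact hloc.fderiv_eq_zero
  have hkey : ∀ v, (1 / 2) * fderiv ℝ (phi F) y₀ v = Lξ v := by
    intro v
    have := congrArg (fun (L : (Fin n → ℝ) →L[ℝ] ℝ) => L v) hzero
    simpa [sub_eq_zero, smul_eq_mul] using this
  refine ⟨y₀, hy₀ne, ?_⟩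
  funext j
  have := fund_yyv hF hy₀ne (Pi.single j 1)
  rw [legendre, this, hkey, hLξ]
  simp [Pi.single_apply, mul_ite, Finset.sum_ite_eq']

end MinkAux


/-- For every nonzero covector `ξ` there is a unique nonzero `y` with
`ξ = g_y(y,·)`; in particular the Legendre transform `L` is a bijection of `ℝⁿ` onto `(ℝⁿ)*`. -/
theorem legendre_bijective {n : ℕ} (F : (Fin n → ℝ) → ℝ) (hF : IsMinkowskiNorm F) :
    (∀ ξ : Fin n → ℝ, ξ ≠ 0 → ∃! y : Fin n → ℝ, y ≠ 0 ∧ legendre F y = ξ) ∧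
      Function.Bijective (legendreMap F) := by
  constructor
  · intro ξ hξ
    obtain ⟨y, hy, hl⟩ := MinkAux.exists_legendre hF hξ
    exact ⟨y, ⟨hy, hl⟩, fun z hz => MinkAux.inj_nonzero hF hz.1 hy (hz.2.trans hl.symm)⟩
  · constructor
    · intro y₁ y₂ h
      unfold legendreMap at h
      by_cases h1 : y₁ = 0 <;> by_cases h2 : y₂ = 0
      · rw [h1, h2]
      · exfalso
        rw [if_pos h1, if_neg h2] at h
        have hp := MinkAux.legendre_self_pos hF h2
        rw [← h] at hp
        simp at hp
      · exfalso
        rw [if_neg h1, if_pos h2] at h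
        have hp := MinkAux.legendre_self_pos hF h1
        rw [h] at hp
        simp at hp
      · rw [if_neg h1, if_neg h2] at h
        exact MinkAux.inj_nonzero hF h1 h2 h
    · intro ξ
      by_cases hξ : ξ = 0
      · exact ⟨0, by simp [legendreMap, hξ]⟩
      · obtain ⟨y, hy, hl⟩ := MinkAux.exists_legendre hF hξ
        exact ⟨y, by simp [legendreMap, hy, hl]⟩
end
end

section
/- Let F be a Minkowski norm on ℝⁿ with fundamental tensor g_{ij}(y) = (1/2)[F²]_{y^i y^j}(y), and F* its dual norm with g^{*kl}(ξ) = (1/2)[F*²]_{ξ_k ξ_l}(ξ). If ξ = L(y) is the Legendre transform of y ≠ 0, then the matrix (g^{*kl}(ξ)) equals the inverse matrix (g^{kl}(y)) of (g_{kl}(y)). -/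
open scoped BigOperators

noncomputable section

/-- The fundamental matrix `g_{ij}(y) = (1/2)[F²]_{yⁱyʲ}(y)`. -/
def fundMatrix {n : ℕ} (F : (Fin n → ℝ) → ℝ) (y : Fin n → ℝ) : Matrix (Fin n) (Fin n) ℝ :=
  Matrix.of fun i j => fund F y (Pi.single i 1) (Pi.single j 1)

open Filter Topology
open scoped Matrix

variable {E : Type*} [NormedAddCommGroup E] [NormedSpace ℝ E]

lemma hasDerivAt_line (z v : E) (t0 : ℝ) : HasDerivAt (fun t : ℝ => z + t • v) v t0 := by
  simpa using ((hasDerivAt_id t0).smul_const v).const_add z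

lemma eventually_line_mem {U : Set E} (hU : IsOpen U) {w : E} (hw : w ∈ U) (u : E) :
    ∀ᶠ s : ℝ in 𝓝 0, w + s • u ∈ U := by
  have hc : ContinuousAt (fun s : ℝ => w + s • u) 0 := by fun_prop
  have h0 : U ∈ 𝓝 ((fun s : ℝ => w + s • u) 0) := by simpa using hU.mem_nhds hw
  exact hc.eventually_mem h0

lemma dd_congr {h₁ h₂ : E → ℝ} {w : E} (hh : h₁ =ᶠ[𝓝 w] h₂) (u v : E) :
    deriv (fun s : ℝ => deriv (fun t : ℝ => h₁ (w + s • u + t • v)) 0) 0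
      = deriv (fun s : ℝ => deriv (fun t : ℝ => h₂ (w + s • u + t • v)) 0) 0 := by
  obtain ⟨O, hOsub, hOopen, hwO⟩ := mem_nhds_iff.1 hh
  apply Filter.EventuallyEq.deriv_eq
  filter_upwards [eventually_line_mem hOopen hwO u] with s hs
  apply Filter.EventuallyEq.deriv_eq
  filter_upwards [eventually_line_mem hOopen hs v] with t ht
  exact hOsub ht

lemma inner_deriv_eq {h : E → ℝ} {z : E} (hz : DifferentiableAt ℝ h z) (v : E) :
    deriv (fun t : ℝ => h (z + t • v)) 0 = fderiv ℝ h z v := by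
  have hF : HasFDerivAt h (fderiv ℝ h z) ((fun t : ℝ => z + t • v) 0) := by
    simpa using hz.hasFDerivAt
  exact (hF.comp_hasDerivAt 0 (hasDerivAt_line z v 0)).deriv

lemma eval_hasFDerivAt {h : E → ℝ} {w : E} (hd2 : DifferentiableAt ℝ (fderiv ℝ h) w) (v : E) :
    HasFDerivAt (fun z => fderiv ℝ h z v) ((fderiv ℝ (fderiv ℝ h) w).flip v) w := by
  have := hd2.hasFDerivAt.clm_apply (hasFDerivAt_const v w)
  simpa using this

lemma key_dd (h : E → ℝ) {U : Set E} (hU : IsOpen U) {w : E} (hw : w ∈ U)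
    (hh : ∀ z ∈ U, ContDiffAt ℝ (⊤ : ℕ∞) h z) (u v : E) :
    deriv (fun s : ℝ => deriv (fun t : ℝ => h (w + s • u + t • v)) 0) 0
      = fderiv ℝ (fderiv ℝ h) w u v := by
  have hdiff : ∀ z ∈ U, DifferentiableAt ℝ h z := fun z hz =>
    (hh z hz).differentiableAt (by simp)
  have hd2 : DifferentiableAt ℝ (fderiv ℝ h) w :=
    ((hh w hw).fderiv_right (m := 1) ((WithTop.coe_le_coe.mpr le_top))).differentiableAt one_ne_zero
  have hEv : (fun s : ℝ => deriv (fun t : ℝ => h (w + s • u + t • v)) 0)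
      =ᶠ[𝓝 (0:ℝ)] fun s : ℝ => fderiv ℝ h (w + s • u) v := by
    filter_upwards [eventually_line_mem hU hw u] with s hs
    exact inner_deriv_eq (hdiff _ hs) v
  rw [hEv.deriv_eq]
  have hF : HasFDerivAt (fun z => fderiv ℝ h z v) ((fderiv ℝ (fderiv ℝ h) w).flip v)
      ((fun s : ℝ => w + s • u) 0) := by simpa using eval_hasFDerivAt hd2 v
  have := (hF.comp_hasDerivAt 0 (hasDerivAt_line w u 0)).deriv
  simpa [Function.comp_def] using this

section Homog

variable {f : E → ℝ} (hhom : ∀ c : ℝ, 0 < c → ∀ z, f (c • z) = c ^ 2 * f z)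
  (hd : ∀ z : E, z ≠ 0 → DifferentiableAt ℝ f z)

include hhom hd in
lemma fderiv_homog {c : ℝ} (hc : 0 < c) {w : E} (hw : w ≠ 0) (v : E) :
    fderiv ℝ f (c • w) v = c * fderiv ℝ f w v := by
  have hsc : HasFDerivAt (fun z : E => c • z) (c • ContinuousLinearMap.id ℝ E) w :=
    (c • ContinuousLinearMap.id ℝ E).hasFDerivAt
  have h1 : HasFDerivAt (fun z => f (c • z))
      ((fderiv ℝ f (c • w)).comp (c • ContinuousLinearMap.id ℝ E)) w :=
    HasFDerivAt.comp w (hd _ (by simp [hc.ne', hw, smul_eq_zero])).hasFDerivAt hsc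
  have h2 : HasFDerivAt (fun z => f (c • z)) ((c ^ 2) • fderiv ℝ f w) w := by
    have : (fun z => f (c • z)) = fun z => c ^ 2 * f z := funext fun z => hhom c hc z
    rw [this]
    simpa [smul_eq_mul] using (hd w hw).hasFDerivAt.const_mul (c ^ 2)
  have := h1.unique h2
  have hv := congrArg (fun (A : E →L[ℝ] ℝ) => A v) this
  simp only [ContinuousLinearMap.coe_comp', ContinuousLinearMap.coe_smul',
    Function.comp_apply, Pi.smul_apply, ContinuousLinearMap.coe_id', id_eq,
    smul_eq_mul, map_smul] at hv
  -- hv : fderiv f (c•w) (c • v) = c^2 * fderiv f w v  (roughly)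
  have hne : c ≠ 0 := hc.ne'
  nlinarith [hv]

include hhom hd in
lemma euler_one {w : E} (hw : w ≠ 0) : fderiv ℝ f w w = 2 * f w := by
  have hline : HasDerivAt (fun t : ℝ => f (w + t • w)) (fderiv ℝ f w w) 0 := by
    have hF : HasFDerivAt f (fderiv ℝ f w) ((fun t : ℝ => w + t • w) 0) := by
      simpa using (hd w hw).hasFDerivAt
    exact hF.comp_hasDerivAt 0 (hasDerivAt_line w w 0)
  have h2 : HasDerivAt (fun t : ℝ => (1 + t) ^ 2 * f w) (2 * f w) 0 := by
    have : HasDerivAt (fun t : ℝ => (1 + t) ^ 2) (2 : ℝ) 0 := by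
      have h := (((hasDerivAt_id (0:ℝ)).const_add 1).pow 2)
      simpa [Pi.pow_def] using h
    simpa using this.mul_const (f w)
  have heq : (fun t : ℝ => (1 + t) ^ 2 * f w) =ᶠ[𝓝 (0:ℝ)] fun t : ℝ => f (w + t • w) := by
    filter_upwards [eventually_gt_nhds (by norm_num : (-1:ℝ) < 0)] with t ht
    have hpos : (0:ℝ) < 1 + t := by linarith
    have : w + t • w = (1 + t) • w := by
      rw [add_smul, one_smul]
    rw [this, hhom _ hpos]
  exact (hline.unique (h2.congr_of_eventuallyEq heq.symm)).symm ▸ rfl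

include hhom hd in
lemma euler_two {w : E} (hw : w ≠ 0) (hd2 : DifferentiableAt ℝ (fderiv ℝ f) w) (v : E) :
    fderiv ℝ (fderiv ℝ f) w w v = fderiv ℝ f w v := by
  have hζ : HasDerivAt (fun t : ℝ => fderiv ℝ f (w + t • w) v)
      (fderiv ℝ (fderiv ℝ f) w w v) 0 := by
    have hF : HasFDerivAt (fun z => fderiv ℝ f z v) ((fderiv ℝ (fderiv ℝ f) w).flip v)
        ((fun t : ℝ => w + t • w) 0) := by simpa using eval_hasFDerivAt hd2 v
    have := hF.comp_hasDerivAt 0 (hasDerivAt_line w w 0)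
    simpa [Function.comp_def] using this
  have h2 : HasDerivAt (fun t : ℝ => (1 + t) * fderiv ℝ f w v) (fderiv ℝ f w v) 0 := by
    simpa using (((hasDerivAt_id (0:ℝ)).const_add 1).mul_const (fderiv ℝ f w v))
  have heq : (fun t : ℝ => (1 + t) * fderiv ℝ f w v)
      =ᶠ[𝓝 (0:ℝ)] fun t : ℝ => fderiv ℝ f (w + t • w) v := by
    filter_upwards [eventually_gt_nhds (by norm_num : (-1:ℝ) < 0)] with t ht
    have hpos : (0:ℝ) < 1 + t := by linarith
    have hrw : w + t • w = (1 + t) • w := by rw [add_smul, one_smul]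
    rw [hrw, fderiv_homog hhom hd hpos hw v]
  exact hζ.unique (h2.congr_of_eventuallyEq heq.symm)

end Homog

section Convex

variable {f : E → ℝ}

lemma convex_ineq (hsm : ∀ z : E, z ≠ 0 → ContDiffAt ℝ (⊤ : ℕ∞) f z)
    (hnn : ∀ z, 0 ≤ f z) (hpos : ∀ z : E, z ≠ 0 → 0 < f z)
    (hhom : ∀ c : ℝ, 0 < c → ∀ z, f (c • z) = c ^ 2 * f z)
    (hposdef : ∀ w : E, w ≠ 0 → ∀ d : E, d ≠ 0 → 0 < fderiv ℝ (fderiv ℝ f) w d d)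
    {w : E} (hw : w ≠ 0) (z : E) :
    fderiv ℝ f w (z - w) ≤ f z - f w := by
  have hd : ∀ z : E, z ≠ 0 → DifferentiableAt ℝ f z := fun z hz =>
    (hsm z hz).differentiableAt (by simp)
  have hd2 : ∀ z : E, z ≠ 0 → DifferentiableAt ℝ (fderiv ℝ f) z := fun z hz =>
    ((hsm z hz).fderiv_right (m := 1) (WithTop.coe_le_coe.mpr le_top)).differentiableAt one_ne_zero
  set d := z - w with hd_def
  rcases eq_or_ne d 0 with hd0 | hd0
  · have : z = w := by
      have := hd0; rw [hd_def, sub_eq_zero] at this; exact this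
    simp [hd0, this]
  by_cases hcase : ∃ c : ℝ, c ≤ 0 ∧ z = c • w
  · obtain ⟨c, hc, rfl⟩ := hcase
    have hE : fderiv ℝ f w w = 2 * f w := euler_one hhom hd hw
    have : fderiv ℝ f w (c • w - w) = (c - 1) * (2 * f w) := by
      rw [map_sub, map_smul, hE]; ring_nf
    rw [this]
    have h1 : 0 ≤ f (c • w) := hnn _
    have h2 : 0 < f w := hpos w hw
    nlinarith
  · -- segment from w to z avoids 0
    have hseg : ∀ t ∈ Set.Icc (0:ℝ) 1, w + t • d ≠ 0 := by
      intro t ht h0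
      rcases eq_or_ne t 0 with rfl | htne
      · simp at h0; exact hw h0
      · have htpos : 0 < t := lt_of_le_of_ne ht.1 (Ne.symm htne)
        have hdv : d = -(t⁻¹) • w := by
          have : t • d = -w := by linear_combination (norm := module) h0
          have := congrArg (fun x => t⁻¹ • x) this
          simp [smul_smul, inv_mul_cancel₀ htne] at this
          rw [this]; module
        apply hcase
        refine ⟨1 - t⁻¹, ?_, ?_⟩
        · have : (1:ℝ) ≤ t⁻¹ := (one_le_inv₀ htpos).mpr ht.2
          linarith
        · have : z = w + d := by rw [hd_def]; abel
          rw [this, hdv]; module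
    set h' : ℝ → ℝ := fun t => fderiv ℝ f (w + t • d) d with hh'
    have hA : ∀ t ∈ Set.Icc (0:ℝ) 1, HasDerivAt (fun t : ℝ => f (w + t • d)) (h' t) t := by
      intro t ht
      have hF : HasFDerivAt f (fderiv ℝ f (w + t • d)) ((fun s : ℝ => w + s • d) t) :=
        (hd _ (hseg t ht)).hasFDerivAt
      exact hF.comp_hasDerivAt t (hasDerivAt_line w d t)
    have hB : ∀ t ∈ Set.Icc (0:ℝ) 1,
        HasDerivAt h' (fderiv ℝ (fderiv ℝ f) (w + t • d) d d) t := by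
      intro t ht
      have hF : HasFDerivAt (fun x => fderiv ℝ f x d)
          ((fderiv ℝ (fderiv ℝ f) (w + t • d)).flip d) ((fun s : ℝ => w + s • d) t) :=
        eval_hasFDerivAt (hd2 _ (hseg t ht)) d
      simpa [Function.comp_def] using hF.comp_hasDerivAt t (hasDerivAt_line w d t)
    have hmono : StrictMonoOn h' (Set.Icc (0:ℝ) 1) := by
      apply strictMonoOn_of_deriv_pos (convex_Icc 0 1)
      · exact fun t ht => ((hB t ht).continuousAt).continuousWithinAt
      · intro t ht
        rw [interior_Icc] at ht
        rw [(hB t ⟨le_of_lt ht.1, le_of_lt ht.2⟩).deriv]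
        exact hposdef _ (hseg t ⟨le_of_lt ht.1, le_of_lt ht.2⟩) d hd0
    obtain ⟨c, hc, hslope⟩ := exists_hasDerivAt_eq_slope (fun t : ℝ => f (w + t • d)) h'
      (by norm_num : (0:ℝ) < 1)
      (fun t ht => ((hA t ht).continuousAt).continuousWithinAt)
      (fun t ht => hA t ⟨le_of_lt ht.1, le_of_lt ht.2⟩)
    have hle : h' 0 ≤ h' c :=
      le_of_lt (hmono ⟨le_refl 0, zero_le_one⟩ ⟨le_of_lt hc.1, le_of_lt hc.2⟩ hc.1)
    have h0eq : h' 0 = fderiv ℝ f w (z - w) := by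
      simp [hh', hd_def]
    have h1eq : h' c = f z - f w := by
      rw [hslope]
      have e1 : w + (1:ℝ) • d = z := by rw [hd_def]; module
      have e0 : w + (0:ℝ) • d = w := by module
      rw [e1, e0]; ring
    rw [← h0eq, ← h1eq]
    exact hle

end Convex

lemma key_dd' (h : E → ℝ) {U : Set E} (hU : IsOpen U) {w : E} (hw : w ∈ U)
    (hdiff : ∀ z ∈ U, DifferentiableAt ℝ h z) (u v : E) :
    deriv (fun s : ℝ => deriv (fun t : ℝ => h (w + s • u + t • v)) 0) 0
      = deriv (fun s : ℝ => fderiv ℝ h (w + s • u) v) 0 := by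
  apply Filter.EventuallyEq.deriv_eq
  filter_upwards [eventually_line_mem hU hw u] with s hs
  exact inner_deriv_eq (hdiff _ hs) v

lemma dd_const_mul (c : ℝ) (h : E → ℝ) (w u v : E) :
    deriv (fun s : ℝ => deriv (fun t : ℝ => c * h (w + s • u + t • v)) 0) 0
      = c * deriv (fun s : ℝ => deriv (fun t : ℝ => h (w + s • u + t • v)) 0) 0 := by
  have : (fun s : ℝ => deriv (fun t : ℝ => c * h (w + s • u + t • v)) 0)
      = fun s : ℝ => c * deriv (fun t : ℝ => h (w + s • u + t • v)) 0 := by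
    funext s; exact deriv_const_mul_field c
  rw [this, deriv_const_mul_field]

section Spec

variable {n : ℕ}

lemma clm_sum (A : (Fin n → ℝ) →L[ℝ] ℝ) (z : Fin n → ℝ) :
    A z = ∑ i, z i * A (Pi.single i 1) := by
  have hz : z = ∑ i, z i • (Pi.single i (1:ℝ) : Fin n → ℝ) := by
    funext j
    simp [Finset.sum_apply, Pi.single_apply]
  conv_lhs => rw [hz]
  rw [map_sum]
  simp [smul_eq_mul]

/-- dot product with `c` as a continuous linear map. -/
def dotc (c : Fin n → ℝ) : (Fin n → ℝ) →L[ℝ] ℝ :=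
  ∑ i, c i • ContinuousLinearMap.proj i

lemma dotc_apply (c v : Fin n → ℝ) : dotc c v = ∑ i, c i * v i := by
  simp [dotc]

variable {F : (Fin n → ℝ) → ℝ} (hF : IsMinkowskiNorm F)

include hF in
lemma hsm_sq : ∀ z : Fin n → ℝ, z ≠ 0 → ContDiffAt ℝ (⊤ : ℕ∞) (fun z => F z ^ 2) z := by
  intro z hz
  exact (hF.smooth.contDiffAt (isOpen_compl_singleton.mem_nhds hz)).pow 2

include hF in
lemma hd_sq : ∀ z : Fin n → ℝ, z ≠ 0 → DifferentiableAt ℝ (fun z => F z ^ 2) z :=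
  fun z hz => (hsm_sq hF z hz).differentiableAt (by simp)

include hF in
lemma hd2_sq : ∀ z : Fin n → ℝ, z ≠ 0 →
    DifferentiableAt ℝ (fderiv ℝ (fun z => F z ^ 2)) z :=
  fun z hz => ((hsm_sq hF z hz).fderiv_right (m := 1) (WithTop.coe_le_coe.mpr le_top)).differentiableAt one_ne_zero

include hF in
lemma sq_homog : ∀ c : ℝ, 0 < c → ∀ z, F (c • z) ^ 2 = c ^ 2 * F z ^ 2 := by
  intro c hc z
  rw [hF.homog c hc z]; ring

include hF in
lemma fund_eq_B {w : Fin n → ℝ} (hw : w ≠ 0) (u v : Fin n → ℝ) :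
    fund F w u v = (1 / 2) * fderiv ℝ (fderiv ℝ (fun z => F z ^ 2)) w u v := by
  have h := key_dd (fun z => F z ^ 2) isOpen_compl_singleton hw
    (fun z hz => (hsm_sq hF z hz).of_le (by simp)) u v
  rw [fund, h]

include hF in
lemma posdef_B : ∀ w : Fin n → ℝ, w ≠ 0 → ∀ d : Fin n → ℝ, d ≠ 0 →
    0 < fderiv ℝ (fderiv ℝ (fun z => F z ^ 2)) w d d := by
  intro w hw d hd
  have := hF.posdef w hw d hd
  rw [fund_eq_B hF hw] at this
  linarith

include hF in
lemma legendre_eq {w : Fin n → ℝ} (hw : w ≠ 0) (i : Fin n) :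
    legendre F w i = (1 / 2) * fderiv ℝ (fun z => F z ^ 2) w (Pi.single i 1) := by
  rw [legendre, fund_eq_B hF hw,
    euler_two (sq_homog hF) (hd_sq hF) hw (hd2_sq hF w hw)]

include hF in
lemma half_lin_sum {w : Fin n → ℝ} (hw : w ≠ 0) (z : Fin n → ℝ) :
    ∑ i, legendre F w i * z i = (1 / 2) * fderiv ℝ (fun z => F z ^ 2) w z := by
  rw [clm_sum (fderiv ℝ (fun z => F z ^ 2) w) z, Finset.mul_sum]
  refine Finset.sum_congr rfl fun i _ => ?_
  rw [legendre_eq hF hw i]; ring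

include hF in
lemma F_zero : F 0 = 0 := by
  have := hF.homog 2 two_pos 0
  simp at this
  linarith

include hF in
lemma fund_ineq {w : Fin n → ℝ} (hw : w ≠ 0) (z : Fin n → ℝ) :
    (1 / 2) * fderiv ℝ (fun z => F z ^ 2) w z ≤ F w * F z := by
  rcases eq_or_ne z 0 with rfl | hz
  · simp [F_zero hF]
  · have hFw := hF.pos w hw
    have hFz := hF.pos z hz
    set c : ℝ := F w / F z with hc
    have hcpos : 0 < c := div_pos hFw hFz
    have key := convex_ineq (f := fun z => F z ^ 2) (hsm_sq hF)
      (fun z => by positivity) (fun z hz => pow_pos (hF.pos z hz) 2)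
      (sq_homog hF) (posdef_B hF) hw (c • z)
    have h1 : F (c • z) ^ 2 = F w ^ 2 := by
      rw [sq_homog hF c hcpos z, hc]
      field_simp
    have h2 : fderiv ℝ (fun z => F z ^ 2) w (c • z - w)
        = c * fderiv ℝ (fun z => F z ^ 2) w z - fderiv ℝ (fun z => F z ^ 2) w w := by
      rw [map_sub, map_smul]; simp [smul_eq_mul]
    have h3 : fderiv ℝ (fun z => F z ^ 2) w w = 2 * F w ^ 2 :=
      euler_one (sq_homog hF) (hd_sq hF) hw
    simp only [h2, h3, h1] at key
    have hL : c * fderiv ℝ (fun z => F z ^ 2) w z ≤ 2 * F w ^ 2 := by nlinarith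
    rw [hc] at hL
    rw [div_mul_eq_mul_div, div_le_iff₀ hFz] at hL
    nlinarith

end Spec

/-- If `ξ = L(y)` is the Legendre transform of `y ≠ 0`, then the matrix
`(g^{*kl}(ξ)) = ((1/2)[F*²]_{ξ_k ξ_l}(ξ))` is the inverse of the matrix `(g_{kl}(y))`. -/
theorem dual_fundMatrix_eq_inv {n : ℕ} (F : (Fin n → ℝ) → ℝ) (hF : IsMinkowskiNorm F)
    (y : Fin n → ℝ) (hy : y ≠ 0) :
    fundMatrix (dualNorm F) (legendre F y) = (fundMatrix F y)⁻¹ := by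
  classical
  -- the smooth version of the Legendre transform
  set Lsm : (Fin n → ℝ) → (Fin n → ℝ) :=
    fun w i => (1 / 2) * fderiv ℝ (fun z => F z ^ 2) w (Pi.single i 1) with hLsm_def
  have hLeg : ∀ w : Fin n → ℝ, w ≠ 0 → legendre F w = Lsm w := fun w hw =>
    funext fun i => legendre_eq hF hw i
  have hLsmsm : ContDiffAt ℝ (⊤ : ℕ∞) Lsm y := by
    apply contDiffAt_pi.2
    intro i
    exact contDiffAt_const.mul
      (((hsm_sq hF y hy).fderiv_right (by simp)).clm_apply contDiffAt_const)
  -- the derivative of Lsm at y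
  set A : (Fin n → ℝ) →L[ℝ] (Fin n → ℝ) := ContinuousLinearMap.pi
    (fun i => (1 / 2 : ℝ) •
      ((fderiv ℝ (fderiv ℝ (fun z => F z ^ 2)) y).flip (Pi.single i 1))) with hA_def
  have hAfd : HasFDerivAt Lsm A y := by
    apply hasFDerivAt_pi.2
    intro i
    exact (eval_hasFDerivAt (hd2_sq hF y hy) (Pi.single i 1)).const_mul (1 / 2)
  have hAapp : ∀ u i, A u i = fund F y u (Pi.single i 1) := by
    intro u i
    rw [fund_eq_B hF hy]
    simp [hA_def, ContinuousLinearMap.pi_apply]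
  have hApos : ∀ u : Fin n → ℝ, u ≠ 0 → 0 < ∑ i, u i * A u i := by
    intro u hu
    have hrw : ∑ i, u i * A u i = fund F y u u := by
      rw [fund_eq_B hF hy,
        clm_sum (fderiv ℝ (fderiv ℝ (fun z => F z ^ 2)) y u) u, Finset.mul_sum]
      refine Finset.sum_congr rfl fun i _ => ?_
      rw [hAapp u i, fund_eq_B hF hy]
      ring
    rw [hrw]
    exact hF.posdef y hy u hu
  have hAinj : Function.Injective A := by
    have hker : ∀ u, A u = 0 → u = 0 := by
      intro u hu
      by_contra hne
      have h := hApos u hne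
      rw [hu] at h
      simp at h
    intro a b hab
    have : A (a - b) = 0 := by rw [map_sub, hab, sub_self]
    have := hker _ this
    exact sub_eq_zero.mp this
  set e : (Fin n → ℝ) ≃L[ℝ] (Fin n → ℝ) :=
    (LinearEquiv.ofInjectiveEndo (A : (Fin n → ℝ) →ₗ[ℝ] (Fin n → ℝ)) hAinj).toContinuousLinearEquiv
    with he_def
  have hcoe : (e : (Fin n → ℝ) →L[ℝ] (Fin n → ℝ)) = A := by
    apply ContinuousLinearMap.ext
    intro u
    rfl
  have hAfd' : HasFDerivAt Lsm ((e : (Fin n → ℝ) →L[ℝ] (Fin n → ℝ))) y := by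
    rw [hcoe]; exact hAfd
  have hstrict : HasStrictFDerivAt Lsm ((e : (Fin n → ℝ) →L[ℝ] (Fin n → ℝ))) y := by
    have h := hLsmsm.hasStrictFDerivAt (by simp)
    rwa [hAfd.fderiv, ← hcoe] at h
  set ψ : (Fin n → ℝ) → (Fin n → ℝ) := hstrict.localInverse Lsm _ _ with hψ_def
  set ξ' : Fin n → ℝ := Lsm y with hξ'_def
  have hψξ : ψ ξ' = y := hstrict.localInverse_apply_image
  have hright : ∀ᶠ η in 𝓝 ξ', Lsm (ψ η) = η := hstrict.eventually_right_inverse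
  have hψstrict : HasStrictFDerivAt ψ
      ((e.symm : (Fin n → ℝ) →L[ℝ] (Fin n → ℝ))) ξ' := hstrict.to_localInverse
  have hψcd : ContDiffAt ℝ (⊤ : ℕ∞) ψ ξ' := hLsmsm.to_localInverse hAfd' (by simp)
  have hψne : ∀ᶠ η in 𝓝 ξ', ψ η ≠ 0 := by
    have hc : ContinuousAt ψ ξ' := hψstrict.continuousAt
    exact hc.eventually_ne (by rw [hψξ]; exact hy)
  have hψ2 : ∀ᶠ η in 𝓝 ξ', ContDiffAt ℝ 2 ψ η :=
    (hψcd.of_le (WithTop.coe_le_coe.mpr le_top)).eventually (by simp)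
  -- the local potential function
  set P : (Fin n → ℝ) → ℝ :=
    fun z => (∑ i, z i * ψ z i) - (1 / 2) * F (ψ z) ^ 2 with hP_def
  have hηLeg : ∀ᶠ η in 𝓝 ξ', η = legendre F (ψ η) := by
    filter_upwards [hright, hψne] with η hr hne
    rw [hLeg _ hne, hr]
  have hsumE : ∀ᶠ η in 𝓝 ξ', ∑ i, η i * ψ η i = F (ψ η) ^ 2 := by
    filter_upwards [hηLeg, hψne] with η hη hne
    have h1 : ∑ i, η i * ψ η i = ∑ i, legendre F (ψ η) i * ψ η i :=
      Finset.sum_congr rfl fun i _ => by rw [congrFun hη i]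
    rw [h1, half_lin_sum hF hne, euler_one (sq_homog hF) (hd_sq hF) hne]
    ring
  have hPd : ∀ᶠ η in 𝓝 ξ', HasFDerivAt P (dotc (ψ η)) η := by
    filter_upwards [hηLeg, hψne, hψ2] with η hη hne h2
    have hψd : DifferentiableAt ℝ ψ η := h2.differentiableAt two_ne_zero
    have h1 : HasFDerivAt (fun z => ∑ i, z i * ψ z i)
        (∑ i, (η i • ((ContinuousLinearMap.proj i).comp (fderiv ℝ ψ η))
          + ψ η i • (ContinuousLinearMap.proj i : (Fin n → ℝ) →L[ℝ] ℝ))) η := by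
      apply HasFDerivAt.fun_sum
      intro i _
      have ha : HasFDerivAt (fun z : Fin n → ℝ => z i)
          (ContinuousLinearMap.proj i : (Fin n → ℝ) →L[ℝ] ℝ) η := hasFDerivAt_apply i η
      have hb : HasFDerivAt (fun z => ψ z i)
          ((ContinuousLinearMap.proj i).comp (fderiv ℝ ψ η)) η :=
        by have := (hasFDerivAt_apply i (ψ η)).comp η hψd.hasFDerivAt; exact this
      exact ha.mul hb
    have h2' : HasFDerivAt (fun z => (1 / 2) * F (ψ z) ^ 2)
        ((1 / 2 : ℝ) • ((fderiv ℝ (fun z => F z ^ 2) (ψ η)).comp (fderiv ℝ ψ η))) η := by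
      have hcomp : HasFDerivAt (fun z => F (ψ z) ^ 2)
          ((fderiv ℝ (fun z => F z ^ 2) (ψ η)).comp (fderiv ℝ ψ η)) η :=
        ((hd_sq hF _ hne).hasFDerivAt).comp η hψd.hasFDerivAt
      exact hcomp.const_mul (1 / 2)
    have htot := h1.sub h2'
    have hD : (∑ i, (η i • ((ContinuousLinearMap.proj i).comp (fderiv ℝ ψ η))
          + ψ η i • (ContinuousLinearMap.proj i : (Fin n → ℝ) →L[ℝ] ℝ)))
        - (1 / 2 : ℝ) • ((fderiv ℝ (fun z => F z ^ 2) (ψ η)).comp (fderiv ℝ ψ η))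
        = dotc (ψ η) := by
      apply ContinuousLinearMap.ext
      intro v
      have hkey : (1 / 2) * fderiv ℝ (fun z => F z ^ 2) (ψ η) (fderiv ℝ ψ η v)
          = ∑ i, η i * (fderiv ℝ ψ η v) i := by
        rw [← half_lin_sum hF hne (fderiv ℝ ψ η v)]
        refine Finset.sum_congr rfl fun i _ => ?_
        rw [← hη]
      simp only [ContinuousLinearMap.sub_apply, ContinuousLinearMap.sum_apply,
        ContinuousLinearMap.add_apply, ContinuousLinearMap.smul_apply,
        ContinuousLinearMap.comp_apply, ContinuousLinearMap.proj_apply,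
        smul_eq_mul, dotc_apply]
      rw [Finset.sum_add_distrib]
      rw [← hkey]
      ring
    rw [hD] at htot
    exact htot
  have hdual : ∀ᶠ η in 𝓝 ξ', dualNorm F η = F (ψ η) := by
    filter_upwards [hηLeg, hψne, hsumE] with η hη hne hsum
    have hub : ∀ r ∈ {r : ℝ | ∃ z : Fin n → ℝ, z ≠ 0 ∧ r = (∑ i, η i * z i) / F z},
        r ≤ F (ψ η) := by
      rintro r ⟨z, hz, rfl⟩
      rw [div_le_iff₀ (hF.pos z hz)]
      have hsz : ∑ i, η i * z i = (1 / 2) * fderiv ℝ (fun z => F z ^ 2) (ψ η) z := by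
        rw [← half_lin_sum hF hne z]
        refine Finset.sum_congr rfl fun i _ => ?_
        rw [← hη]
      rw [hsz]
      exact fund_ineq hF hne z
    have hmem : F (ψ η) ∈ {r : ℝ | ∃ z : Fin n → ℝ, z ≠ 0 ∧ r = (∑ i, η i * z i) / F z} := by
      refine ⟨ψ η, hne, ?_⟩
      rw [hsum, sq]
      field_simp
    rw [dualNorm]
    exact le_antisymm (csSup_le ⟨_, hmem⟩ hub) (le_csSup ⟨_, hub⟩ hmem)
  have hhalf : (fun z => dualNorm F z ^ 2) =ᶠ[𝓝 ξ'] fun z => 2 * P z := by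
    filter_upwards [hdual, hsumE] with η hd hsum
    rw [hP_def]
    simp only
    rw [hd, hsum]
    ring
  -- compute the entries of the dual fundamental matrix
  obtain ⟨O, hOsub, hOopen, hξO⟩ := mem_nhds_iff.1 hPd
  have hNentry : ∀ k l : Fin n, fundMatrix (dualNorm F) ξ' k l
      = (e.symm : (Fin n → ℝ) →L[ℝ] (Fin n → ℝ)) (Pi.single k 1) l := by
    intro k l
    set u : Fin n → ℝ := Pi.single k 1 with hu_def
    set v : Fin n → ℝ := Pi.single l 1 with hv_def
    have s2 : deriv (fun s : ℝ => deriv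
          (fun t : ℝ => (dualNorm F (ξ' + s • u + t • v)) ^ 2) 0) 0
        = deriv (fun s : ℝ => deriv (fun t : ℝ => 2 * P (ξ' + s • u + t • v)) 0) 0 :=
      dd_congr hhalf u v
    have s3 : deriv (fun s : ℝ => deriv (fun t : ℝ => 2 * P (ξ' + s • u + t • v)) 0) 0
        = 2 * deriv (fun s : ℝ => deriv (fun t : ℝ => P (ξ' + s • u + t • v)) 0) 0 :=
      dd_const_mul 2 P ξ' u v
    have s4 : deriv (fun s : ℝ => deriv (fun t : ℝ => P (ξ' + s • u + t • v)) 0) 0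
        = deriv (fun s : ℝ => fderiv ℝ P (ξ' + s • u) v) 0 :=
      key_dd' P hOopen hξO (fun z hz => (hOsub hz).differentiableAt) u v
    have s5 : deriv (fun s : ℝ => fderiv ℝ P (ξ' + s • u) v) 0
        = ∑ i, (e.symm : (Fin n → ℝ) →L[ℝ] (Fin n → ℝ)) u i * v i := by
      have germ : (fun s : ℝ => fderiv ℝ P (ξ' + s • u) v)
          =ᶠ[𝓝 (0:ℝ)] fun s : ℝ => ∑ i, ψ (ξ' + s • u) i * v i := by
        filter_upwards [eventually_line_mem hOopen hξO u] with s hs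
        rw [(hOsub hs).fderiv]
        exact dotc_apply _ v
      rw [germ.deriv_eq]
      have hψl : HasDerivAt (fun s : ℝ => ψ (ξ' + s • u))
          ((e.symm : (Fin n → ℝ) →L[ℝ] (Fin n → ℝ)) u) 0 := by
        have hψF : HasFDerivAt ψ ((e.symm : (Fin n → ℝ) →L[ℝ] (Fin n → ℝ)))
            ((fun s : ℝ => ξ' + s • u) 0) := by
          simpa using hψstrict.hasFDerivAt
        exact hψF.comp_hasDerivAt 0 (hasDerivAt_line ξ' u 0)
      have hDsum : HasDerivAt (fun s : ℝ => ∑ i, ψ (ξ' + s • u) i * v i)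
          (∑ i, (e.symm : (Fin n → ℝ) →L[ℝ] (Fin n → ℝ)) u i * v i) 0 := by
        apply HasDerivAt.fun_sum
        intro i _
        exact (hasDerivAt_pi.1 hψl i).mul_const (v i)
      exact hDsum.deriv
    have : fundMatrix (dualNorm F) ξ' k l
        = (1 / 2) * deriv (fun s : ℝ => deriv
            (fun t : ℝ => (dualNorm F (ξ' + s • u + t • v)) ^ 2) 0) 0 := rfl
    rw [this, s2, s3, s4, s5]
    have hsingle : ∑ i, (e.symm : (Fin n → ℝ) →L[ℝ] (Fin n → ℝ)) u i * v i
        = (e.symm : (Fin n → ℝ) →L[ℝ] (Fin n → ℝ)) u l := by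
      rw [hv_def]
      rw [Finset.sum_eq_single l]
      · simp
      · intro b _ hb
        simp [Pi.single_apply, hb]
      · intro h
        exact absurd (Finset.mem_univ l) h
    rw [hsingle]
    ring
  -- matrix algebra
  set M : Matrix (Fin n) (Fin n) ℝ := fundMatrix F y with hM_def
  set N : Matrix (Fin n) (Fin n) ℝ := fundMatrix (dualNorm F) ξ' with hN_def
  have hMsymm : ∀ i j, M i j = M j i := by
    intro i j
    have hsym := second_derivative_symmetric_of_eventually
      (f := fun z => F z ^ 2) (f' := fderiv ℝ (fun z => F z ^ 2)) (x := y)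
      (by filter_upwards [isOpen_compl_singleton.mem_nhds hy] with z hz
          exact (hd_sq hF z hz).hasFDerivAt)
      (hd2_sq hF y hy).hasFDerivAt (Pi.single i 1) (Pi.single j 1)
    show fund F y (Pi.single i 1) (Pi.single j 1) = fund F y (Pi.single j 1) (Pi.single i 1)
    rw [fund_eq_B hF hy, fund_eq_B hF hy, hsym]
  have hMT : Mᵀ = M := by
    ext i j
    exact hMsymm j i
  have hAu : ∀ u : Fin n → ℝ, A u = Matrix.mulVec Mᵀ u := by
    intro u
    funext i
    rw [hAapp u i, fund_eq_B hF hy,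
      ← ContinuousLinearMap.flip_apply (fderiv ℝ (fderiv ℝ (fun z => F z ^ 2)) y)
        u (Pi.single i 1),
      clm_sum ((fderiv ℝ (fderiv ℝ (fun z => F z ^ 2)) y).flip (Pi.single i 1)) u,
      Finset.mul_sum]
    rw [Matrix.mulVec]
    simp only [Matrix.transpose_apply, dotProduct]
    refine Finset.sum_congr rfl fun j _ => ?_
    have : M j i = fund F y (Pi.single j 1) (Pi.single i 1) := rfl
    rw [this, fund_eq_B hF hy]
    simp [ContinuousLinearMap.flip_apply]
    ring
  have hNu : ∀ x : Fin n → ℝ,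
      (e.symm : (Fin n → ℝ) →L[ℝ] (Fin n → ℝ)) x = Matrix.mulVec Nᵀ x := by
    intro x
    funext i
    have hproj := clm_sum ((ContinuousLinearMap.proj i).comp
      (e.symm : (Fin n → ℝ) →L[ℝ] (Fin n → ℝ))) x
    simp only [ContinuousLinearMap.comp_apply, ContinuousLinearMap.proj_apply] at hproj
    rw [hproj, Matrix.mulVec]
    simp only [Matrix.transpose_apply, dotProduct]
    refine Finset.sum_congr rfl fun k _ => ?_
    rw [hNentry k i, mul_comm]
  have hMN : Mᵀ * Nᵀ = 1 := by
    ext i j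
    have hx : (Mᵀ * Nᵀ).mulVec (Pi.single j 1) = Pi.single j 1 := by
      rw [← Matrix.mulVec_mulVec, ← hNu, ← hAu]
      have : A ((e.symm : (Fin n → ℝ) →L[ℝ] (Fin n → ℝ)) (Pi.single j 1))
          = Pi.single j 1 := by
        rw [← hcoe]
        exact e.apply_symm_apply (Pi.single j 1)
      rw [this]
    have := congrFun hx i
    rw [Matrix.mulVec_single] at this
    simp only [Pi.smul_apply, MulOpposite.op_one, one_smul, Matrix.col_apply] at this
    rw [this, Matrix.one_apply, Pi.single_apply]
  rw [hMT] at hMN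
  have hNT : M⁻¹ = Nᵀ := Matrix.inv_eq_right_inv hMN
  have hgoal : fundMatrix (dualNorm F) (legendre F y) = N := by
    rw [hLeg y hy]
  rw [hgoal]
  have hNfin : N = (M⁻¹)ᵀ := by rw [hNT, Matrix.transpose_transpose]
  rw [hNfin, Matrix.transpose_nonsing_inv, hMT]
end
end
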